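/- Let G be a finite simple graph with vertex set V, let ρ ∈ V, let r ≥ 1 and k be natural numbers, let ω : V → ℤ be a weight function, and let W ∈ ℤ. Let S_{k,W} be the family of all subsets C ⊆ V such that ρ ∈ C, |C| = k, ω(C) = W, C is an r-dominating set of G, and the induced subgraph G[C] is connected. Let C_{k,W} be the set of all pairs (C, (C1, C2)) such that ρ ∈ C, |C| = k, ω(C) = W, C is an r-dominating set of G, and (C1, C2) is a consistent cut of G[C]. Then |S_{k,W}| ≡ |C_{k,W}| (mod 2). -/

import Mathlib

/-!
For a fixed `C ∋ ρ`, if `G[C]` is connected its only consistent cut is `(C, ∅)`. Otherwise let `K`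
be the set of vertices of `C` not reachable from `ρ` in `G[C]`: replacing `(C1, C2)` by
`(C1 ∆ K, C2 ∆ K)` moves every component of `G[C]` other than that of `ρ` to the opposite side,
which is a fixed-point-free involution on the consistent cuts, so their number is even.
Summing over `C` gives the congruence.
-/

/-- `(C1, C2)` is a consistent cut of the induced subgraph `G[C]` (with root `ρ`):
`C1` and `C2` are disjoint, their union is `C`, `ρ ∈ C1`, and no edge of `G`
joins a vertex of `C1` to a vertex of `C2`. -/
def IsConsistentCut {V : Type*} (G : SimpleGraph V) (ρ : V) (C C1 C2 : Set V) : Prop :=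
  Disjoint C1 C2 ∧ C1 ∪ C2 = C ∧ ρ ∈ C1 ∧ ∀ u ∈ C1, ∀ v ∈ C2, ¬ G.Adj u v

/-- `D` is an `r`-dominating set of `G`: every vertex of `G` is within distance `r`
(i.e. joined by a walk of length at most `r`) of some vertex of `D`. -/
def RDominates {V : Type*} (G : SimpleGraph V) (r : ℕ) (D : Finset V) : Prop :=
  ∀ v : V, ∃ d ∈ D, ∃ w : G.Walk v d, w.length ≤ r

open scoped symmDiff

theorem Function.Involutive.even_natCard_of_forall_ne {α : Type*} [Finite α] {f : α → α}
    (hf : Function.Involutive f) (hne : ∀ x, f x ≠ x) : Even (Nat.card α) := by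
  classical
  have := Fintype.ofFinite α
  have hsq : hf.toPerm f ^ 2 = 1 := by ext x; simp [sq, hf x]
  have hsupp : (hf.toPerm f).support = Finset.univ := by
    ext x; simpa using hne x
  rw [Nat.card_eq_fintype_card, even_iff_two_dvd, ← Finset.card_univ, ← hsupp]
  exact Equiv.Perm.two_dvd_card_support hsq

namespace IsConsistentCut

variable {V : Type*} {G : SimpleGraph V} {ρ : V} {C C1 C2 : Set V}

theorem mem_left_of_reachable (h : IsConsistentCut G ρ C C1 C2) (hρ : ρ ∈ C) {x : C}
    (hx : (G.induce C).Reachable ⟨ρ, hρ⟩ x) : (x : V) ∈ C1 := by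
  obtain ⟨hdisj, hunion, hρ1, hedge⟩ := h
  by_contra hx1
  obtain ⟨p⟩ := hx
  obtain ⟨d, -, hd1, hd2⟩ := p.exists_boundary_dart {y | (y : V) ∈ C1} hρ1 hx1
  have hd2' : (d.snd : V) ∈ C2 := (hunion ▸ d.snd.2 : (d.snd : V) ∈ C1 ∪ C2).resolve_left hd2
  exact hedge _ hd1 _ hd2' (SimpleGraph.comap_adj.mp d.adj)

theorem eq_of_connected (h : IsConsistentCut G ρ C C1 C2) (hρ : ρ ∈ C)
    (hconn : (G.induce C).Connected) : C1 = C ∧ C2 = ∅ := by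
  have hC1 : ∀ x ∈ C, x ∈ C1 := fun x hx => h.mem_left_of_reachable hρ (hconn ⟨ρ, hρ⟩ ⟨x, hx⟩)
  obtain ⟨hdisj, hunion, -⟩ := h
  refine ⟨subset_antisymm (hunion ▸ Set.subset_union_left) hC1, ?_⟩
  rw [Set.eq_empty_iff_forall_notMem]
  intro x hx
  exact Set.disjoint_left.mp hdisj (hC1 x (hunion ▸ Or.inr hx)) hx

theorem symmDiff {K : Set V} (h : IsConsistentCut G ρ C C1 C2) (hKC : K ⊆ C) (hρK : ρ ∉ K)
    (hK : ∀ u ∈ K, ∀ v ∈ C, G.Adj u v → v ∈ K) :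
    IsConsistentCut G ρ C (C1 ∆ K) (C2 ∆ K) := by
  obtain ⟨hdisj, hunion, hρ1, hedge⟩ := h
  have hmem : ∀ x, x ∈ C ↔ x ∈ C1 ∨ x ∈ C2 := fun x => by rw [← hunion]; rfl
  have hdisj' := Set.disjoint_left.mp hdisj
  refine ⟨?_, ?_, ?_, ?_⟩
  · rw [Set.disjoint_left]
    intro x hx1 hx2
    simp only [Set.mem_symmDiff] at hx1 hx2
    have := hmem x
    have := @hKC x
    have := @hdisj' x
    tauto
  · ext x
    simp only [Set.mem_union, Set.mem_symmDiff]
    have := hmem x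
    have := @hKC x
    have := @hdisj' x
    tauto
  · exact Set.mem_symmDiff.mpr (Or.inl ⟨hρ1, hρK⟩)
  · intro u hu v hv huv
    have huC : u ∈ C := hu.elim (fun h => (hmem u).2 (Or.inl h.1)) (fun h => hKC h.1)
    have hvC : v ∈ C := hv.elim (fun h => (hmem v).2 (Or.inr h.1)) (fun h => hKC h.1)
    have hKuv : u ∈ K ↔ v ∈ K := ⟨fun h => hK u h v hvC huv, fun h => hK v h u huC huv.symm⟩
    rcases hu with ⟨hu1, huK⟩ | ⟨huK, hu1⟩ <;> rcases hv with ⟨hv2, hvK⟩ | ⟨hvK, hv2⟩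
    · exact hedge u hu1 v hv2 huv
    · exact huK (hKuv.2 hvK)
    · exact hvK (hKuv.1 huK)
    · have hu2 := ((hmem u).1 huC).resolve_left hu1
      have hv1 := ((hmem v).1 hvC).resolve_right hv2
      exact hedge v hv1 u hu2 huv.symm

end IsConsistentCut

section Counting

variable {V : Type*} (G : SimpleGraph V) (ρ : V)

abbrev ConsistentCuts (C : Set V) : Type _ := {p : Set V × Set V // IsConsistentCut G ρ C p.1 p.2}

variable {G ρ}

theorem exists_nonempty_closed_of_not_connected {C : Set V} (hρ : ρ ∈ C)
    (h : ¬ (G.induce C).Connected) :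
    ∃ K ⊆ C, ρ ∉ K ∧ (∀ u ∈ K, ∀ v ∈ C, G.Adj u v → v ∈ K) ∧ K.Nonempty := by
  have : ∃ x : C, ¬ (G.induce C).Reachable ⟨ρ, hρ⟩ x := by
    by_contra! hall
    exact h ((G.induce C).connected_iff.2 ⟨fun x y => (hall x).symm.trans (hall y), ⟨⟨ρ, hρ⟩⟩⟩)
  obtain ⟨x, hx⟩ := this
  refine ⟨{v | ∃ hv : v ∈ C, ¬ (G.induce C).Reachable ⟨ρ, hρ⟩ ⟨v, hv⟩}, fun v hv => hv.1,
    fun ⟨_, hρ'⟩ => hρ' .rfl, ?_, x, x.2, hx⟩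
  rintro u ⟨huC, hu⟩ v hvC huv
  exact ⟨hvC, fun hv => hu (hv.trans (SimpleGraph.Adj.reachable (by simpa using huv.symm)))⟩

theorem card_consistentCuts_of_connected {C : Set V} (hρ : ρ ∈ C)
    (hconn : (G.induce C).Connected) : Nat.card (ConsistentCuts G ρ C) = 1 := by
  rw [Nat.card_eq_one_iff_exists]
  refine ⟨⟨(C, ∅), Set.disjoint_empty _, Set.union_empty _, hρ, fun _ _ _ hv => hv.elim⟩, ?_⟩
  rintro ⟨⟨C1, C2⟩, h⟩
  obtain ⟨rfl, rfl⟩ := h.eq_of_connected hρ hconn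
  rfl

theorem even_card_consistentCuts [Finite V] {C K : Set V} (hKC : K ⊆ C) (hρK : ρ ∉ K)
    (hK : ∀ u ∈ K, ∀ v ∈ C, G.Adj u v → v ∈ K) (hKne : K.Nonempty) :
    Even (Nat.card (ConsistentCuts G ρ C)) := by
  let f : ConsistentCuts G ρ C → ConsistentCuts G ρ C :=
    fun p => ⟨(p.1.1 ∆ K, p.1.2 ∆ K), p.2.symmDiff hKC hρK hK⟩
  refine Function.Involutive.even_natCard_of_forall_ne (f := f) ?_ ?_
  · intro p
    simp [f, symmDiff_symmDiff_cancel_right]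
  · intro p hp
    have : p.1.1 ∆ K = p.1.1 := congrArg (·.1.1) hp
    exact hKne.ne_empty (symmDiff_eq_left.mp this)

theorem card_consistentCuts_modEq [Finite V] {C : Set V} [Decidable (G.induce C).Connected]
    (hρ : ρ ∈ C) :
    Nat.card (ConsistentCuts G ρ C) ≡ if (G.induce C).Connected then 1 else 0 [MOD 2] := by
  split_ifs with hconn
  · rw [card_consistentCuts_of_connected hρ hconn]
  · obtain ⟨K, hKC, hρK, hK, hKne⟩ := exists_nonempty_closed_of_not_connected hρ hconn
    exact (even_card_consistentCuts hKC hρK hK hKne).two_dvd.modEq_zero_nat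

end Counting

theorem card_connected_modEq_card_consistentCuts {V : Type*} [Fintype V] (G : SimpleGraph V)
    (ρ : V) (P : Finset V → Prop) :
    Nat.card {C : Finset V // ρ ∈ C ∧ P C ∧ (G.induce (↑C : Set V)).Connected} ≡
    Nat.card {q : Finset V × (Set V × Set V) //
        ρ ∈ q.1 ∧ P q.1 ∧ IsConsistentCut G ρ (↑q.1 : Set V) q.2.1 q.2.2} [MOD 2] := by
  classical
  calc Nat.card {C : Finset V // ρ ∈ C ∧ P C ∧ (G.induce (↑C : Set V)).Connected}
      = ∑ C : Finset V, if ρ ∈ C ∧ P C ∧ (G.induce (↑C : Set V)).Connected then 1 else 0 := by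
        rw [Nat.card_eq_fintype_card, Fintype.card_subtype, Finset.card_filter]
    _ ≡ ∑ C : Finset V, if ρ ∈ C ∧ P C then Nat.card (ConsistentCuts G ρ C) else 0 [MOD 2] := by
        refine Nat.ModEq.sum fun C _ => ?_
        by_cases hC : ρ ∈ C ∧ P C
        · simp only [hC, true_and, if_true]
          exact (card_consistentCuts_modEq hC.1).symm
        · rw [if_neg fun h => hC ⟨h.1, h.2.1⟩, if_neg hC]
    _ = Nat.card {q : Finset V × (Set V × Set V) //
        ρ ∈ q.1 ∧ P q.1 ∧ IsConsistentCut G ρ (↑q.1 : Set V) q.2.1 q.2.2} := by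
        rw [Nat.card_congr (Equiv.subtypeProdEquivSigmaSubtype
          fun (C : Finset V) (p : Set V × Set V) => ρ ∈ C ∧ P C ∧ IsConsistentCut G ρ C p.1 p.2),
          Nat.card_sigma]
        refine Finset.sum_congr rfl fun C _ => ?_
        split_ifs with hC
        · exact Nat.card_congr (Equiv.subtypeEquivRight fun p => by simp only [hC, true_and])
        · exact (Nat.card_eq_zero.2 (Or.inl ⟨fun p => hC ⟨p.2.1, p.2.2.1⟩⟩)).symm

theorem num_connected_rdom_modEq_num_cuts_general {V : Type*} [Fintype V]
    (G : SimpleGraph V) (ρ : V) (r k : ℕ) (ω : V → ℤ) (W : ℤ) :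
    Nat.card {C : Finset V //
        ρ ∈ C ∧ C.card = k ∧ (∑ v ∈ C, ω v) = W ∧ RDominates G r C ∧
        (G.induce (↑C : Set V)).Connected} ≡
    Nat.card {q : Finset V × (Set V × Set V) //
        ρ ∈ q.1 ∧ q.1.card = k ∧ (∑ v ∈ q.1, ω v) = W ∧ RDominates G r q.1 ∧
        IsConsistentCut G ρ (↑q.1 : Set V) q.2.1 q.2.2} [MOD 2] := by
  simpa only [and_assoc] using card_connected_modEq_card_consistentCuts G ρ
    fun C => C.card = k ∧ ∑ v ∈ C, ω v = W ∧ RDominates G r C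

/-- The number of connected `r`-dominating sets of size `k`, weight `W`, containing `ρ`,
is congruent modulo 2 to the number of pairs `(C, (C1, C2))` where `C` is an
`r`-dominating set of size `k` and weight `W` containing `ρ` and `(C1, C2)` is a
consistent cut of `G[C]`. -/
theorem num_connected_rdom_modEq_num_cuts {V : Type*} [Fintype V] [DecidableEq V]
    (G : SimpleGraph V) (ρ : V) (r k : ℕ) (hr : 1 ≤ r) (ω : V → ℤ) (W : ℤ) :
    Nat.card {C : Finset V //
        ρ ∈ C ∧ C.card = k ∧ (∑ v ∈ C, ω v) = W ∧ RDominates G r C ∧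
        (G.induce (↑C : Set V)).Connected} ≡
    Nat.card {q : Finset V × (Set V × Set V) //
        ρ ∈ q.1 ∧ q.1.card = k ∧ (∑ v ∈ q.1, ω v) = W ∧ RDominates G r q.1 ∧
        IsConsistentCut G ρ (↑q.1 : Set V) q.2.1 q.2.2} [MOD 2] :=
  num_connected_rdom_modEq_num_cuts_general G ρ r k ω W
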